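/- arXiv:1806.10700 — 2 statements merged into one kernel-verified Lean document; each statement's English description precedes it below -/
import Mathlib

section
/- The set QSym_𝔦 of quasisymmetric functions on a totally ordered index set 𝔦 is a subring (indeed a ℤ-subalgebra) of the formal power series ring ℤ⟦α_i : i ∈ 𝔦⟧; that is, it contains 0 and 1 and is closed under addition, negation, and multiplication. -/
/-!
STATEMENT 0: The set `QSym_𝔦` of quasisymmetric functions on a totally ordered index set `𝔦`
is a subring (indeed a ℤ-subalgebra) of the formal power series ring `ℤ⟦α_i : i ∈ 𝔦⟧`:
it contains `0` and `1` and is closed under addition, negation, (integer scalar multiplication)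
and multiplication.
-/

open MvPowerSeries

noncomputable section

/-- The exponent vector of the monomial `α_{i 0}^{l 0} ⋯ α_{i (ℓ-1)}^{l (ℓ-1)}`. -/
def qsMonom {ι : Type*} (l : List ℕ+) (i : Fin l.length → ι) : ι →₀ ℕ :=
  ∑ k : Fin l.length, Finsupp.single (i k) (l.get k : ℕ)

/-- A power series `f ∈ R⟦α_i : i ∈ ι⟧` is quasisymmetric if it has bounded degree and,
for every list `l` of positive integers and every two strictly increasing tuples of indices
`i_1 < ⋯ < i_ℓ` and `j_1 < ⋯ < j_ℓ`, the coefficients of `f` at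
`α_{i_1}^{l_1} ⋯ α_{i_ℓ}^{l_ℓ}` and `α_{j_1}^{l_1} ⋯ α_{j_ℓ}^{l_ℓ}` agree. -/
def IsQSym {ι : Type*} [LinearOrder ι] {R : Type*} [CommRing R] (f : MvPowerSeries ι R) : Prop :=
  (∃ N : ℕ, ∀ d : ι →₀ ℕ, N < d.sum (fun _ n => n) → MvPowerSeries.coeff (R := R) d f = 0) ∧
  ∀ (l : List ℕ+) (i j : Fin l.length → ι), StrictMono i → StrictMono j →
    MvPowerSeries.coeff (R := R) (qsMonom l i) f = MvPowerSeries.coeff (R := R) (qsMonom l j) f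

/-!
Closure under the additive operations is immediate. For products, let `σ` be a permutation of
the variables with `σ (i k) = j k`. It is increasing on the support of every monomial dividing
`α_i^I`, so it preserves the coefficients of a quasisymmetric series at those monomials. The
coefficient of a product at `α_i^I` only involves coefficients at its divisors, and relabelling
the variables by `σ` is a ring automorphism carrying `α_i^I` to `α_j^I`; hence the coefficients
of `f * g` at `α_i^I` and at `α_j^I` agree.
-/

open Finsupp

namespace MvPowerSeries

variable {σ τ R : Type*}

theorem coeff_mul_eq_of_coeff_eq_of_le [Semiring R] {f g f' g' : MvPowerSeries σ R}
    {m : σ →₀ ℕ} (hf : ∀ d ≤ m, coeff d f = coeff d f') (hg : ∀ d ≤ m, coeff d g = coeff d g') :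
    coeff m (f * g) = coeff m (f' * g') := by
  classical
  rw [coeff_mul, coeff_mul]
  refine Finset.sum_congr rfl fun p hp => ?_
  rw [Finset.HasAntidiagonal.mem_antidiagonal] at hp
  rw [hf p.1 (hp ▸ le_self_add), hg p.2 (hp ▸ le_add_self)]

theorem coeff_mul_eq_zero_of_lt_degree [Semiring R] {f g : MvPowerSeries σ R} {M N : ℕ}
    (hf : ∀ d : σ →₀ ℕ, M < d.degree → coeff d f = 0)
    (hg : ∀ d : σ →₀ ℕ, N < d.degree → coeff d g = 0) {m : σ →₀ ℕ} (hm : M + N < m.degree) :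
    coeff m (f * g) = 0 := by
  classical
  rw [coeff_mul]
  refine Finset.sum_eq_zero fun p hp => ?_
  rw [Finset.HasAntidiagonal.mem_antidiagonal] at hp
  have hdeg : p.1.degree + p.2.degree = m.degree := by rw [← map_add, hp]
  by_cases h : M < p.1.degree
  · rw [hf _ h, zero_mul]
  · rw [hg _ (by omega), mul_zero]

theorem coeff_rename_symm [CommSemiring R] (e : σ ≃ τ) (f : MvPowerSeries τ R) (d : σ →₀ ℕ) :
    coeff d (rename e.symm f) = coeff (mapDomain e d) f := by
  rw [← coeff_embDomain_rename e.toEmbedding, embDomain_eq_mapDomain, rename_rename]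
  simp

end MvPowerSeries

section qsMonom

variable {ι κ : Type*}

theorem qsMonom_eq_zero_iff {l : List ℕ+} {i : Fin l.length → ι} : qsMonom l i = 0 ↔ l = [] := by
  simp [qsMonom, Finset.sum_eq_zero_iff, ← isEmpty_iff, ← not_nonempty_iff,
    ← Fin.pos_iff_nonempty]

theorem support_qsMonom_subset (l : List ℕ+) (i : Fin l.length → ι) :
    ↑(qsMonom l i).support ⊆ Set.range i := by
  classical
  intro x hx
  rw [Finset.mem_coe, mem_support_iff] at hx
  contrapose! hx
  simpa [qsMonom, single_apply] using fun k hk => hx ⟨k, hk⟩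

theorem mapDomain_qsMonom (f : ι → κ) (l : List ℕ+) (i : Fin l.length → ι) :
    mapDomain f (qsMonom l i) = qsMonom l (f ∘ i) := by
  simp [qsMonom, mapDomain_finsetSum]

theorem qsMonom_ofFn {n : ℕ} (c : Fin n → ℕ+) (i : Fin n → ι) :
    qsMonom (List.ofFn c) (i ∘ Fin.cast List.length_ofFn) = ∑ k, single (i k) (c k : ℕ) := by
  unfold qsMonom
  refine Fintype.sum_equiv (finCongr List.length_ofFn) _ _ fun k => ?_
  simp only [Function.comp_apply, List.get_eq_getElem, List.getElem_ofFn, finCongr_apply]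
  rfl

theorem exists_strictMono_qsMonom_eq [LinearOrder ι] (d : ι →₀ ℕ) :
    ∃ (l : List ℕ+) (i : Fin l.length → ι), StrictMono i ∧ Set.range i ⊆ ↑d.support ∧
      qsMonom l i = d := by
  set e := d.support.orderEmbOfFin rfl
  have he : ∀ k, e k ∈ d.support := d.support.orderEmbOfFin_mem rfl
  refine ⟨List.ofFn fun k => (d (e k)).toPNat (Nat.pos_of_ne_zero (mem_support_iff.mp (he k))),
    e ∘ Fin.cast List.length_ofFn, e.strictMono.comp (Fin.cast_strictMono _), ?_, ?_⟩
  · rintro _ ⟨k, rfl⟩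
    exact he _
  · rw [qsMonom_ofFn]
    conv_rhs => rw [← d.sum_single, Finsupp.sum, ← d.support.map_orderEmbOfFin_univ rfl]
    rw [Finset.sum_map]
    rfl

end qsMonom

section IsQSym

variable {ι R : Type*} [LinearOrder ι] [CommRing R] {f g : MvPowerSeries ι R}

theorem isQSym_zero : IsQSym (0 : MvPowerSeries ι R) :=
  ⟨⟨0, fun d _ => map_zero (coeff d)⟩, fun _ _ _ _ _ => rfl⟩

theorem isQSym_one : IsQSym (1 : MvPowerSeries ι R) := by
  refine ⟨⟨0, fun d hd => ?_⟩, fun _ _ _ _ _ => by simp only [coeff_one, qsMonom_eq_zero_iff]⟩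
  rw [coeff_one, if_neg]
  rintro rfl
  simp at hd

theorem IsQSym.coeff_mapDomain (hf : IsQSym f) {τ : ι → ι} {d : ι →₀ ℕ}
    (hτ : StrictMonoOn τ d.support) : coeff (mapDomain τ d) f = coeff d f := by
  obtain ⟨l, i, hi, hrange, rfl⟩ := exists_strictMono_qsMonom_eq d
  rw [mapDomain_qsMonom]
  exact hf.2 l _ _ (fun a b hab => hτ (hrange ⟨a, rfl⟩) (hrange ⟨b, rfl⟩) (hi hab)) hi

theorem IsQSym.add (hf : IsQSym f) (hg : IsQSym g) : IsQSym (f + g) := by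
  obtain ⟨⟨M, hM⟩, hf⟩ := hf
  obtain ⟨⟨N, hN⟩, hg⟩ := hg
  refine ⟨⟨max M N, fun d hd => ?_⟩, fun l i j hi hj => ?_⟩
  · rw [map_add, hM d (lt_of_le_of_lt (le_max_left _ _) hd),
      hN d (lt_of_le_of_lt (le_max_right _ _) hd), add_zero]
  · rw [map_add, map_add, hf l i j hi hj, hg l i j hi hj]

theorem IsQSym.neg (hf : IsQSym f) : IsQSym (-f) := by
  obtain ⟨⟨M, hM⟩, hf⟩ := hf
  exact ⟨⟨M, fun d hd => by rw [map_neg, hM d hd, neg_zero]⟩,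
    fun l i j hi hj => by rw [map_neg, map_neg, hf l i j hi hj]⟩

theorem IsQSym.smul (c : R) (hf : IsQSym f) : IsQSym (c • f) := by
  obtain ⟨⟨M, hM⟩, hf⟩ := hf
  exact ⟨⟨M, fun d hd => by rw [map_smul, hM d hd, smul_zero]⟩,
    fun l i j hi hj => by rw [map_smul, map_smul, hf l i j hi hj]⟩

theorem IsQSym.mul (hf : IsQSym f) (hg : IsQSym g) : IsQSym (f * g) := by
  obtain ⟨M, hM⟩ := hf.1
  obtain ⟨N, hN⟩ := hg.1
  refine ⟨⟨M + N, fun d hd => coeff_mul_eq_zero_of_lt_degree hM hN hd⟩, fun l i j hi hj => ?_⟩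
  obtain ⟨σ, hσ⟩ := Equiv.Perm.exists_extending_pair i j hi.injective hj.injective
  have hσ_mono : StrictMonoOn σ (Set.range i) := by
    rintro _ ⟨a, rfl⟩ _ ⟨b, rfl⟩ h
    rw [hσ, hσ]
    exact hj (hi.lt_iff_lt.mp h)
  have hcoeff_rename {F : MvPowerSeries ι R} (hF : IsQSym F) :
      ∀ d ≤ qsMonom l i, coeff d F = coeff d (rename σ.symm F) := fun d hd => by
    have hsupp : ↑d.support ⊆ Set.range i :=
      (Finset.coe_subset.mpr (support_mono hd)).trans (support_qsMonom_subset l i)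
    rw [coeff_rename_symm, hF.coeff_mapDomain (hσ_mono.mono hsupp)]
  have hσ_qsMonom : mapDomain σ (qsMonom l i) = qsMonom l j := by
    rw [mapDomain_qsMonom]
    exact congrArg _ (funext hσ)
  rw [coeff_mul_eq_of_coeff_eq_of_le (hcoeff_rename hf) (hcoeff_rename hg), ← map_mul,
    coeff_rename_symm, hσ_qsMonom]

end IsQSym

/-- `QSym_𝔦` is a subring (indeed a ℤ-subalgebra) of `ℤ⟦α_i : i ∈ 𝔦⟧`. -/
theorem isQSym_zero_one_add_neg_zsmul_mul (ι : Type*) [LinearOrder ι] :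
    IsQSym (0 : MvPowerSeries ι ℤ) ∧
    IsQSym (1 : MvPowerSeries ι ℤ) ∧
    (∀ f g : MvPowerSeries ι ℤ, IsQSym f → IsQSym g → IsQSym (f + g)) ∧
    (∀ f : MvPowerSeries ι ℤ, IsQSym f → IsQSym (-f)) ∧
    (∀ (c : ℤ) (f : MvPowerSeries ι ℤ), IsQSym f → IsQSym (c • f)) ∧
    (∀ f g : MvPowerSeries ι ℤ, IsQSym f → IsQSym g → IsQSym (f * g)) :=
  ⟨isQSym_zero, isQSym_one, fun _ _ => IsQSym.add, fun _ => IsQSym.neg,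
    fun c _ => IsQSym.smul c, fun _ _ => IsQSym.mul⟩

end
end

section
/- (Graded variant of a lemma of Vezzosi–Vistoli.) Let A, B, C be ℕ-graded commutative rings, let f: B → A and g: B → C be graded ring homomorphisms, and suppose there exists a homomorphism of abelian groups φ: A → B such that (1) the sequence 0 → A →^φ B →^g C → 0 is exact, and (2) the composition f ∘ φ: A → A is multiplication by an element a ∈ A of pure degree which is not a zero-divisor. Then g induces a ring homomorphism q: C ≅ B/im(φ) → A/(a), and the map (f, g): B → A ×_{A/(a)} C into the fiber product of the projection A → A/(a) and q is an isomorphism of graded rings. -/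
/-!
Exactness identifies `ker g` with `φ(A)`, and `f` maps it onto `aA`, so `f` descends to
`q : C = B / φ(A) → A/(a)`. The map `(f, g)` is injective because an element of `ker f ∩ ker g`
is `φ x` with `a x = f (φ x) = 0`, whence `x = 0`; it hits every `(x, g b)` of the fiber
product since `x - f b = a t` is corrected by `b + φ t`. An injective pair of graded
homomorphisms reflects homogeneity: if `f b` and `g b` lie in degree `d`, so do the images
of the degree-`d` component of `b`, which therefore equals `b`.
-/

namespace VezzosiVistoli

section Graded

variable {ι A B C : Type*} [DecidableEq ι] [AddMonoid ι] [CommRing A] [CommRing B] [CommRing C]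
  {𝒜 : ι → AddSubgroup A} {ℬ : ι → AddSubgroup B} {𝒞 : ι → AddSubgroup C}
  [GradedRing 𝒜] [GradedRing ℬ] [GradedRing 𝒞]

theorem mem_of_injective_prodMk (f : ℬ →+*ᵍ 𝒜) (g : ℬ →+*ᵍ 𝒞)
    (hinj : Function.Injective fun b : B => (f b, g b)) {d : ι} {b : B}
    (hfb : f b ∈ 𝒜 d) (hgb : g b ∈ 𝒞 d) : b ∈ ℬ d := by
  have hb : DirectSum.decompose ℬ b d = b := hinj <| Prod.ext
    (show f _ = f b by
      rw [GradedRingHom.map_directSumDecompose, DirectSum.decompose_of_mem_same 𝒜 hfb])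
    (show g _ = g b by
      rw [GradedRingHom.map_directSumDecompose, DirectSum.decompose_of_mem_same 𝒞 hgb])
  exact hb ▸ SetLike.coe_mem _

end Graded

section Exact

variable {A B C : Type*} [CommRing A] [CommRing B] [CommRing C]
  (f : B →+* A) (g : B →+* C) (φ : A →+ B) {a : A}

theorem exists_lift_mk_comp (hgsurj : Function.Surjective g)
    (hker : ∀ b : B, g b = 0 → b ∈ Set.range φ) (hfφ : ∀ x : A, f (φ x) = a * x) :
    ∃ q : C →+* A ⧸ Ideal.span {a},
      ∀ b : B, q (g b) = Ideal.Quotient.mk (Ideal.span {a}) (f b) := by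
  have hle : RingHom.ker g ≤ RingHom.ker ((Ideal.Quotient.mk (Ideal.span {a})).comp f) := by
    intro b hb
    obtain ⟨x, rfl⟩ := hker b hb
    rw [RingHom.mem_ker, RingHom.comp_apply, hfφ, Ideal.Quotient.eq_zero_iff_mem]
    exact Ideal.mul_mem_right _ _ (Ideal.mem_span_singleton_self a)
  exact ⟨g.liftOfSurjective hgsurj ⟨_, hle⟩, g.liftOfSurjective_comp_apply hgsurj ⟨_, hle⟩⟩

theorem injective_prodMk (hker : ∀ b : B, g b = 0 → b ∈ Set.range φ)
    (hfφ : ∀ x : A, f (φ x) = a * x) (hnzd : ∀ x : A, a * x = 0 → x = 0) :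
    Function.Injective fun b : B => (f b, g b) := by
  refine (injective_iff_map_eq_zero (f.prod g)).2 fun b hb => ?_
  obtain ⟨hfb, hgb⟩ := Prod.ext_iff.1 hb
  obtain ⟨x, rfl⟩ := hker b hgb
  rw [hnzd x ((hfφ x).symm.trans hfb), map_zero]

theorem range_prodMk_eq (hgsurj : Function.Surjective g) (hgφ : ∀ x : A, g (φ x) = 0)
    (hfφ : ∀ x : A, f (φ x) = a * x) (q : C →+* A ⧸ Ideal.span {a})
    (hq : ∀ b : B, q (g b) = Ideal.Quotient.mk (Ideal.span {a}) (f b)) :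
    Set.range (fun b : B => (f b, g b)) =
      {p : A × C | Ideal.Quotient.mk (Ideal.span {a}) p.1 = q p.2} := by
  ext ⟨x, y⟩
  constructor
  · rintro ⟨b, hb⟩
    obtain ⟨rfl, rfl⟩ := Prod.ext_iff.1 hb
    exact (hq b).symm
  · intro hxy
    obtain ⟨b, rfl⟩ := hgsurj y
    obtain ⟨t, ht⟩ := Ideal.mem_span_singleton'.1 <|
      Ideal.Quotient.eq.1 (show Ideal.Quotient.mk _ x = _ from hxy.trans (hq b))
    refine ⟨b + φ t, ?_⟩
    simp only [map_add, hfφ, hgφ, add_zero, mul_comm a, ht, add_sub_cancel]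

end Exact

end VezzosiVistoli

open VezzosiVistoli in
theorem vezzosi_vistoli_graded_general
    (A B C : Type*) [CommRing A] [CommRing B] [CommRing C]
    (𝒜 : ℕ → AddSubgroup A) (ℬ : ℕ → AddSubgroup B) (𝒞 : ℕ → AddSubgroup C)
    [GradedRing 𝒜] [GradedRing ℬ] [GradedRing 𝒞]
    (f : B →+* A) (g : B →+* C) (φ : A →+ B)
    -- `f` and `g` are graded ring homomorphisms
    (hf : ∀ (d : ℕ) (x : B), x ∈ ℬ d → f x ∈ 𝒜 d)
    (hg : ∀ (d : ℕ) (x : B), x ∈ ℬ d → g x ∈ 𝒞 d)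
    -- exactness of `0 → A → B → C → 0`
    (hgsurj : Function.Surjective g)
    (hker : ∀ b : B, g b = 0 ↔ b ∈ Set.range φ)
    -- `f ∘ φ` is multiplication by `a`, of pure degree, not a zero divisor
    (a : A) (hfφ : ∀ x : A, f (φ x) = a * x)
    (hnzd : ∀ x : A, a * x = 0 → x = 0) :
    ∃ q : C →+* A ⧸ Ideal.span {a},
      (∀ b : B, q (g b) = Ideal.Quotient.mk (Ideal.span {a}) (f b)) ∧
      -- `(f, g)` is injective with image exactly the fiber product `A ×_{A/(a)} C`
      Function.Injective (fun b : B => ((f b, g b) : A × C)) ∧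
      Set.range (fun b : B => ((f b, g b) : A × C)) =
        {p : A × C | Ideal.Quotient.mk (Ideal.span {a}) p.1 = q p.2} ∧
      -- the inverse is also graded: `(f, g)` identifies the graded pieces
      (∀ (d : ℕ) (b : B), f b ∈ 𝒜 d → g b ∈ 𝒞 d → b ∈ ℬ d) := by
  obtain ⟨q, hq⟩ := exists_lift_mk_comp f g φ hgsurj (fun b => (hker b).1) hfφ
  have hinj := injective_prodMk f g φ (fun b => (hker b).1) hfφ hnzd
  have hrange := range_prodMk_eq f g φ hgsurj (fun x => (hker _).2 ⟨x, rfl⟩) hfφ q hq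
  exact ⟨q, hq, hinj, hrange, fun d b =>
    mem_of_injective_prodMk (𝒜 := 𝒜) (ℬ := ℬ) (𝒞 := 𝒞) ⟨f, hf _ _⟩ ⟨g, hg _ _⟩ hinj⟩

theorem vezzosi_vistoli_graded
    (A B C : Type*) [CommRing A] [CommRing B] [CommRing C]
    (𝒜 : ℕ → AddSubgroup A) (ℬ : ℕ → AddSubgroup B) (𝒞 : ℕ → AddSubgroup C)
    [GradedRing 𝒜] [GradedRing ℬ] [GradedRing 𝒞]
    (f : B →+* A) (g : B →+* C) (φ : A →+ B)
    -- `f` and `g` are graded ring homomorphisms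
    (hf : ∀ (d : ℕ) (x : B), x ∈ ℬ d → f x ∈ 𝒜 d)
    (hg : ∀ (d : ℕ) (x : B), x ∈ ℬ d → g x ∈ 𝒞 d)
    -- exactness of `0 → A → B → C → 0`
    (hφinj : Function.Injective φ)
    (hgsurj : Function.Surjective g)
    (hker : ∀ b : B, g b = 0 ↔ b ∈ Set.range φ)
    -- `f ∘ φ` is multiplication by `a`, of pure degree, not a zero divisor
    (a : A) (hfφ : ∀ x : A, f (φ x) = a * x)
    (hdeg : ∃ d : ℕ, a ∈ 𝒜 d)
    (hnzd : ∀ x : A, a * x = 0 → x = 0) :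
    ∃ q : C →+* A ⧸ Ideal.span {a},
      (∀ b : B, q (g b) = Ideal.Quotient.mk (Ideal.span {a}) (f b)) ∧
      -- `(f, g)` is injective with image exactly the fiber product `A ×_{A/(a)} C`
      Function.Injective (fun b : B => ((f b, g b) : A × C)) ∧
      Set.range (fun b : B => ((f b, g b) : A × C)) =
        {p : A × C | Ideal.Quotient.mk (Ideal.span {a}) p.1 = q p.2} ∧
      -- the inverse is also graded: `(f, g)` identifies the graded pieces
      (∀ (d : ℕ) (b : B), f b ∈ 𝒜 d → g b ∈ 𝒞 d → b ∈ ℬ d) :=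
  vezzosi_vistoli_graded_general A B C 𝒜 ℬ 𝒞 f g φ hf hg hgsurj hker a hfφ hnzd
end
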